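/- Let λ_1 ≥ λ_2 ≥ … ≥ λ_n be real numbers with Σ_{i=1}^n λ_i² = 1, and let I := {(i,j) : 1 ≤ i, j ≤ n, λ_i − λ_j > 2/√3}. Then Σ_{(i,j)∈I} ((λ_i − λ_j)² − 4/3) ≤ 2/3, and equality holds if and only if I has exactly one element and λ_1 = √2/2, λ_n = −√2/2, and λ_2 = ⋯ = λ_{n−1} = 0. -/
import Mathlib

set_option maxHeartbeats 1000000


theorem index_sum_bound (n : ℕ) (hn : 1 ≤ n) (lam : Fin n → ℝ)
    (hmono : ∀ i j : Fin n, i ≤ j → lam j ≤ lam i)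
    (hnorm : ∑ i : Fin n, (lam i) ^ 2 = 1) :
    (∑ p ∈ Finset.univ.filter
        (fun p : Fin n × Fin n => 2 / Real.sqrt 3 < lam p.1 - lam p.2),
        ((lam p.1 - lam p.2) ^ 2 - 4 / 3) ≤ 2 / 3) ∧
    ((∑ p ∈ Finset.univ.filter
        (fun p : Fin n × Fin n => 2 / Real.sqrt 3 < lam p.1 - lam p.2),
        ((lam p.1 - lam p.2) ^ 2 - 4 / 3) = 2 / 3) ↔
      ((Finset.univ.filter
          (fun p : Fin n × Fin n => 2 / Real.sqrt 3 < lam p.1 - lam p.2)).card = 1 ∧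
        lam ⟨0, by omega⟩ = Real.sqrt 2 / 2 ∧
        lam ⟨n - 1, by omega⟩ = -(Real.sqrt 2 / 2) ∧
        ∀ i : Fin n, i.val ≠ 0 → i.val ≠ n - 1 → lam i = 0)) := by
  have hs3 : (0:ℝ) < Real.sqrt 3 := Real.sqrt_pos.mpr (by norm_num)
  have hs3sq : Real.sqrt 3 ^ 2 = 3 := Real.sq_sqrt (by norm_num)
  set T : ℝ := 2 / Real.sqrt 3 with hTdef
  have hTpos : 0 < T := by positivity
  have hT2 : T ^ 2 = 4 / 3 := by
    rw [hTdef, div_pow, hs3sq]; norm_num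
  have sqlt : ∀ x y : ℝ, 0 < x → x < y → x ^ 2 < y ^ 2 := by
    intro x y hx hxy
    nlinarith
  set F := Finset.univ.filter (fun p : Fin n × Fin n => T < lam p.1 - lam p.2) with hFdef
  have hmemF : ∀ p : Fin n × Fin n, p ∈ F → T < lam p.1 - lam p.2 := by
    intro p hp
    rw [hFdef] at hp
    exact (Finset.mem_filter.mp hp).2
  have key : ∀ s : Finset (Fin n), ∑ i ∈ s, lam i ^ 2 ≤ 1 := by
    intro s
    rw [← hnorm]
    exact Finset.sum_le_sum_of_subset_of_nonneg (Finset.subset_univ s)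
      (fun i _ _ => sq_nonneg _)
  have key1 : ∀ i : Fin n, lam i ^ 2 ≤ 1 := by
    intro i
    have h := key {i}
    simpa using h
  have key2 : ∀ i j : Fin n, i ≠ j → lam i ^ 2 + lam j ^ 2 ≤ 1 := by
    intro i j hij
    have h := key {i, j}
    rwa [Finset.sum_pair hij] at h
  have key3 : ∀ i j k : Fin n, i ≠ j → i ≠ k → j ≠ k →
      lam i ^ 2 + lam j ^ 2 + lam k ^ 2 ≤ 1 := by
    intro i j k hij hik hjk
    have h := key {i, j, k}
    rw [Finset.sum_insert (by simp [hij, hik]), Finset.sum_pair hjk] at h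
    linarith
  have key4 : ∀ i j k l : Fin n, i ≠ j → i ≠ k → i ≠ l → j ≠ k → j ≠ l → k ≠ l →
      lam i ^ 2 + lam j ^ 2 + lam k ^ 2 + lam l ^ 2 ≤ 1 := by
    intro i j k l hij hik hil hjk hjl hkl
    have h := key {i, j, k, l}
    rw [Finset.sum_insert (by simp [hij, hik, hil]),
        Finset.sum_insert (by simp [hjk, hjl]), Finset.sum_pair hkl] at h
    linarith
  have hsign : ∀ p : Fin n × Fin n, p ∈ F → 0 < lam p.1 ∧ lam p.2 < 0 := by
    intro p hp
    have hp' := hmemF p hp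
    constructor
    · by_contra h
      push_neg at h
      have h1 : T < -lam p.2 := by linarith
      have h2 := sqlt T _ hTpos h1
      have h3 : (-lam p.2) ^ 2 = lam p.2 ^ 2 := by ring
      have := key1 p.2
      linarith
    · by_contra h
      push_neg at h
      have h1 : T < lam p.1 := by linarith
      have h2 := sqlt T _ hTpos h1
      have := key1 p.1
      linarith
  have hne12 : ∀ p : Fin n × Fin n, p ∈ F → p.1 ≠ p.2 := by
    intro p hp h
    have hp' := hmemF p hp
    rw [h] at hp'
    linarith
  have hdisj : ∀ p ∈ F, ∀ q ∈ F, p.1 = q.1 ∨ p.2 = q.2 := by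
    intro p hp q hq
    by_contra h
    push_neg at h
    obtain ⟨h1, h2⟩ := h
    have hp' := hmemF p hp
    have hq' := hmemF q hq
    have hsp := hsign p hp
    have hsq' := hsign q hq
    have d12 : p.1 ≠ p.2 := hne12 p hp
    have d14 : p.1 ≠ q.2 := fun hh => by rw [hh] at hsp; linarith [hsp.1, hsq'.2]
    have d32 : q.1 ≠ p.2 := fun hh => by rw [hh] at hsq'; linarith [hsq'.1, hsp.2]
    have d34 : q.1 ≠ q.2 := hne12 q hq
    have h4 := key4 p.1 p.2 q.1 q.2 d12 h1 d14 (fun hh => d32 hh.symm) h2 d34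
    have e1 : T ^ 2 < (lam p.1 - lam p.2) ^ 2 := sqlt T _ hTpos hp'
    have e2 : T ^ 2 < (lam q.1 - lam q.2) ^ 2 := sqlt T _ hTpos hq'
    have idp : (lam p.1 - lam p.2) ^ 2 + (lam p.1 + lam p.2) ^ 2
        = 2 * lam p.1 ^ 2 + 2 * lam p.2 ^ 2 := by ring
    have idq : (lam q.1 - lam q.2) ^ 2 + (lam q.1 + lam q.2) ^ 2
        = 2 * lam q.1 ^ 2 + 2 * lam q.2 ^ 2 := by ring
    have n1 := sq_nonneg (lam p.1 + lam p.2)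
    have n2 := sq_nonneg (lam q.1 + lam q.2)
    linarith
  have hstruct : (∀ p ∈ F, ∀ q ∈ F, p.1 = q.1) ∨ (∀ p ∈ F, ∀ q ∈ F, p.2 = q.2) := by
    by_cases hA : ∀ p ∈ F, ∀ q ∈ F, p.1 = q.1
    · exact Or.inl hA
    · right
      push_neg at hA
      obtain ⟨p, hp, q, hq, hpq⟩ := hA
      have hpq2 : p.2 = q.2 := (hdisj p hp q hq).resolve_left hpq
      have haux : ∀ r ∈ F, r.2 = p.2 := by
        intro r hr
        rcases hdisj r hr p hp with h | h
        · rcases hdisj r hr q hq with h' | h'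
          · exact absurd (h.symm.trans h') hpq
          · rw [h', ← hpq2]
        · exact h
      intro r hr u hu
      rw [haux r hr, haux u hu]
  have hcard : F.card ≤ 2 := by
    by_contra hc
    push_neg at hc
    obtain ⟨p, q, r, hp, hq, hr, hpq, hpr, hqr⟩ := Finset.two_lt_card_iff.mp hc
    have hp' := hmemF p hp
    have hq' := hmemF q hq
    have hr' := hmemF r hr
    have hsp := hsign p hp
    have hsq' := hsign q hq
    have hsr := hsign r hr
    rcases hstruct with hS | hS
    · -- all share first coordinate
      have e1 : p.1 = q.1 := hS p hp q hq
      have e2 : p.1 = r.1 := hS p hp r hr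
      have d2 : p.2 ≠ q.2 := fun hh => hpq (Prod.ext e1 hh)
      have d3 : p.2 ≠ r.2 := fun hh => hpr (Prod.ext e2 hh)
      have d4 : q.2 ≠ r.2 := fun hh => hqr (Prod.ext (e1.symm.trans e2) hh)
      have da2 : p.1 ≠ p.2 := hne12 p hp
      have da3 : p.1 ≠ q.2 := fun hh => by rw [hh] at hsp; linarith [hsp.1, hsq'.2]
      have da4 : p.1 ≠ r.2 := fun hh => by rw [hh] at hsp; linarith [hsp.1, hsr.2]
      have h4 := key4 p.1 p.2 q.2 r.2 da2 da3 da4 d2 d3 d4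
      rw [← e1] at hq'
      rw [← e2] at hr'
      have f1 : T ^ 2 < (lam p.1 - lam p.2) ^ 2 := sqlt T _ hTpos hp'
      have f2 : T ^ 2 < (lam p.1 - lam q.2) ^ 2 := sqlt T _ hTpos hq'
      have f3 : T ^ 2 < (lam p.1 - lam r.2) ^ 2 := sqlt T _ hTpos hr'
      have idt : (lam p.1 - lam p.2) ^ 2 + (lam p.1 - lam q.2) ^ 2
          + (lam p.1 - lam r.2) ^ 2
          + (3 * (lam p.2 + lam p.1 / 3) ^ 2 + 3 * (lam q.2 + lam p.1 / 3) ^ 2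
            + 3 * (lam r.2 + lam p.1 / 3) ^ 2)
          = 4 * (lam p.1 ^ 2 + lam p.2 ^ 2 + lam q.2 ^ 2 + lam r.2 ^ 2) := by ring
      have n1 := sq_nonneg (lam p.2 + lam p.1 / 3)
      have n2 := sq_nonneg (lam q.2 + lam p.1 / 3)
      have n3 := sq_nonneg (lam r.2 + lam p.1 / 3)
      linarith
    · -- all share second coordinate
      have e1 : p.2 = q.2 := hS p hp q hq
      have e2 : p.2 = r.2 := hS p hp r hr
      have d2 : p.1 ≠ q.1 := fun hh => hpq (Prod.ext hh e1)
      have d3 : p.1 ≠ r.1 := fun hh => hpr (Prod.ext hh e2)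
      have d4 : q.1 ≠ r.1 := fun hh => hqr (Prod.ext hh (e1.symm.trans e2))
      have da2 : p.1 ≠ p.2 := hne12 p hp
      have da3 : q.1 ≠ p.2 := fun hh => by rw [hh] at hsq'; linarith [hsq'.1, hsp.2]
      have da4 : r.1 ≠ p.2 := fun hh => by rw [hh] at hsr; linarith [hsr.1, hsp.2]
      have h4 := key4 p.1 q.1 r.1 p.2 d2 d3 da2 d4 da3 da4
      rw [← e1] at hq'
      rw [← e2] at hr'
      have f1 : T ^ 2 < (lam p.1 - lam p.2) ^ 2 := sqlt T _ hTpos hp'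
      have f2 : T ^ 2 < (lam q.1 - lam p.2) ^ 2 := sqlt T _ hTpos hq'
      have f3 : T ^ 2 < (lam r.1 - lam p.2) ^ 2 := sqlt T _ hTpos hr'
      have idt : (lam p.1 - lam p.2) ^ 2 + (lam q.1 - lam p.2) ^ 2
          + (lam r.1 - lam p.2) ^ 2
          + (3 * (lam p.1 + lam p.2 / 3) ^ 2 + 3 * (lam q.1 + lam p.2 / 3) ^ 2
            + 3 * (lam r.1 + lam p.2 / 3) ^ 2)
          = 4 * (lam p.1 ^ 2 + lam q.1 ^ 2 + lam r.1 ^ 2 + lam p.2 ^ 2) := by ring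
      have n1 := sq_nonneg (lam p.1 + lam p.2 / 3)
      have n2 := sq_nonneg (lam q.1 + lam p.2 / 3)
      have n3 := sq_nonneg (lam r.1 + lam p.2 / 3)
      linarith
  rcases (show F.card = 0 ∨ F.card = 1 ∨ F.card = 2 by omega) with h0 | h1 | h2
  · -- empty case
    have hFe : F = ∅ := Finset.card_eq_zero.mp h0
    have hsumval : ∑ p ∈ F, ((lam p.1 - lam p.2) ^ 2 - 4 / 3) = 0 := by
      rw [hFe]; exact Finset.sum_empty
    refine ⟨by rw [hsumval]; norm_num, ?_, ?_⟩
    · intro h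
      rw [hsumval] at h
      norm_num at h
    · rintro ⟨hc1, -⟩
      omega
  · -- card = 1
    obtain ⟨p, hFp⟩ := Finset.card_eq_one.mp h1
    have hpF : p ∈ F := by rw [hFp]; exact Finset.mem_singleton_self p
    have hp' := hmemF p hpF
    have hsumval : ∑ q ∈ F, ((lam q.1 - lam q.2) ^ 2 - 4 / 3)
        = (lam p.1 - lam p.2) ^ 2 - 4 / 3 := by
      rw [hFp, Finset.sum_singleton]
    have hnep : p.1 ≠ p.2 := hne12 p hpF
    have h2sum := key2 p.1 p.2 hnep
    have hs2 : Real.sqrt 2 ^ 2 = 2 := Real.sq_sqrt (by norm_num)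
    have hs2pos : (0:ℝ) < Real.sqrt 2 := Real.sqrt_pos.mpr (by norm_num)
    have hineq1 : (lam p.1 - lam p.2) ^ 2 - 4 / 3 ≤ 2 / 3 := by
      have idp : (lam p.1 - lam p.2) ^ 2 + (lam p.1 + lam p.2) ^ 2
          = 2 * lam p.1 ^ 2 + 2 * lam p.2 ^ 2 := by ring
      have n1 := sq_nonneg (lam p.1 + lam p.2)
      linarith
    refine ⟨by rw [hsumval]; linarith, ?_, ?_⟩
    · -- forward direction
      intro heq
      rw [hsumval] at heq
      have hd2 : (lam p.1 - lam p.2) ^ 2 = 2 := by linarith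
      have hdpos : 0 < lam p.1 - lam p.2 := lt_trans hTpos hp'
      have hdval : lam p.1 - lam p.2 = Real.sqrt 2 := by
        have hz : (lam p.1 - lam p.2 - Real.sqrt 2) * (lam p.1 - lam p.2 + Real.sqrt 2) = 0 := by
          linear_combination hd2 - hs2
        rcases mul_eq_zero.mp hz with h | h
        · linarith
        · linarith
      have hsum0 : lam p.1 + lam p.2 = 0 := by
        have hle : (lam p.1 + lam p.2) ^ 2 ≤ 0 := by
          have idp : (lam p.1 - lam p.2) ^ 2 + (lam p.1 + lam p.2) ^ 2
              = 2 * lam p.1 ^ 2 + 2 * lam p.2 ^ 2 := by ring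
          linarith
        have : (lam p.1 + lam p.2) ^ 2 = 0 := le_antisymm hle (sq_nonneg _)
        exact pow_eq_zero_iff (by norm_num) |>.mp this
      have haval : lam p.1 = Real.sqrt 2 / 2 := by linarith
      have hbval : lam p.2 = -(Real.sqrt 2 / 2) := by linarith
      have hrest : ∀ k : Fin n, k ≠ p.1 → k ≠ p.2 → lam k = 0 := by
        intro k hk1 hk2
        have hsplit := Finset.sum_sdiff (f := fun i => lam i ^ 2)
          (Finset.subset_univ ({p.1, p.2} : Finset (Fin n)))
        rw [Finset.sum_pair hnep, hnorm] at hsplit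
        have hpair : lam p.1 ^ 2 + lam p.2 ^ 2 = 1 := by
          rw [haval, hbval]
          linear_combination hs2 / 2
        have hsd : ∑ i ∈ (Finset.univ \ {p.1, p.2} : Finset (Fin n)), lam i ^ 2 = 0 := by
          linarith
        have hk := (Finset.sum_eq_zero_iff_of_nonneg
          (fun i _ => sq_nonneg (lam i))).mp hsd k (by simp [hk1, hk2])
        exact pow_eq_zero_iff (by norm_num) |>.mp hk
      have hzlt : (0:ℝ) < Real.sqrt 2 / 2 := by positivity
      have hi0le : ∀ i : Fin n, (⟨0, by omega⟩ : Fin n) ≤ i :=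
        fun i => Fin.le_def.mpr (Nat.zero_le _)
      have hiNle : ∀ i : Fin n, i ≤ (⟨n - 1, by omega⟩ : Fin n) := by
        intro i
        rw [Fin.le_def]
        show i.val ≤ n - 1
        have := i.isLt
        omega
      have hfirst : lam ⟨0, by omega⟩ = Real.sqrt 2 / 2 := by
        by_cases h01 : (⟨0, by omega⟩ : Fin n) = p.1
        · rw [h01, haval]
        · have hge : lam p.1 ≤ lam ⟨0, by omega⟩ := hmono _ p.1 (hi0le p.1)
          by_cases h02 : (⟨0, by omega⟩ : Fin n) = p.2
          · exfalso
            rw [h02, hbval, haval] at hge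
            linarith
          · exfalso
            rw [hrest _ h01 h02, haval] at hge
            linarith
      have hlast : lam ⟨n - 1, by omega⟩ = -(Real.sqrt 2 / 2) := by
        by_cases hN2 : (⟨n - 1, by omega⟩ : Fin n) = p.2
        · rw [hN2, hbval]
        · have hle : lam ⟨n - 1, by omega⟩ ≤ lam p.2 := hmono p.2 _ (hiNle p.2)
          by_cases hN1 : (⟨n - 1, by omega⟩ : Fin n) = p.1
          · exfalso
            rw [hN1, haval, hbval] at hle
            linarith
          · exfalso
            rw [hrest _ hN1 hN2, hbval] at hle
            linarith
      have hmid : ∀ i : Fin n, i.val ≠ 0 → i.val ≠ n - 1 → lam i = 0 := by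
        intro i hi0 hiN
        by_cases hip1 : i = p.1
        · exfalso
          have h01 : (⟨0, by omega⟩ : Fin n) ≠ p.1 := by
            rw [← hip1]
            intro hh
            exact hi0 (congrArg Fin.val hh).symm
          have hge : lam p.1 ≤ lam ⟨0, by omega⟩ := hmono _ p.1 (hi0le p.1)
          by_cases h02 : (⟨0, by omega⟩ : Fin n) = p.2
          · rw [h02, hbval, haval] at hge
            linarith
          · rw [hrest _ h01 h02, haval] at hge
            linarith
        · by_cases hip2 : i = p.2
          · exfalso
            have hN2 : (⟨n - 1, by omega⟩ : Fin n) ≠ p.2 := by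
              rw [← hip2]
              intro hh
              exact hiN (congrArg Fin.val hh).symm
            have hle : lam ⟨n - 1, by omega⟩ ≤ lam p.2 := hmono p.2 _ (hiNle p.2)
            by_cases hN1 : (⟨n - 1, by omega⟩ : Fin n) = p.1
            · rw [hN1, haval, hbval] at hle
              linarith
            · rw [hrest _ hN1 hN2, hbval] at hle
              linarith
          · exact hrest i hip1 hip2
      exact ⟨h1, hfirst, hlast, hmid⟩
    · -- backward direction
      rintro ⟨hc1, hfv, hlv, hmv⟩
      rw [hsumval]
      have hspos : (0:ℝ) < Real.sqrt 2 / 2 := by positivity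
      have hhalf : (Real.sqrt 2 / 2) ^ 2 = 1 / 2 := by
        rw [div_pow, hs2]; norm_num
      have hsltT : Real.sqrt 2 / 2 < T := by
        by_contra hcon
        push_neg at hcon
        have h2 : T ^ 2 ≤ (Real.sqrt 2 / 2) ^ 2 := pow_le_pow_left₀ hTpos.le hcon 2
        linarith
      have hv : ∀ i : Fin n, lam i = Real.sqrt 2 / 2 ∨ lam i = -(Real.sqrt 2 / 2)
          ∨ lam i = 0 := by
        intro i
        by_cases hz : i.val = 0
        · left
          have : i = (⟨0, by omega⟩ : Fin n) := Fin.ext hz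
          rw [this]; exact hfv
        · by_cases hN : i.val = n - 1
          · right; left
            have : i = (⟨n - 1, by omega⟩ : Fin n) := Fin.ext hN
            rw [this]; exact hlv
          · right; right; exact hmv i hz hN
      rcases hv p.1 with h1' | h1' | h1' <;> rcases hv p.2 with h2' | h2' | h2' <;>
        rw [h1', h2'] at hp' ⊢ <;>
        first
          | (exfalso; linarith)
          | linear_combination hs2
  · -- card = 2
    obtain ⟨p, q, hpq, hFpq⟩ := Finset.card_eq_two.mp h2
    have hpF : p ∈ F := by rw [hFpq]; simp
    have hqF : q ∈ F := by rw [hFpq]; simp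
    have hp' := hmemF p hpF
    have hq' := hmemF q hqF
    have hsp := hsign p hpF
    have hsq' := hsign q hqF
    have hsumval : ∑ r ∈ F, ((lam r.1 - lam r.2) ^ 2 - 4 / 3)
        = ((lam p.1 - lam p.2) ^ 2 - 4 / 3) + ((lam q.1 - lam q.2) ^ 2 - 4 / 3) := by
      rw [hFpq, Finset.sum_pair hpq]
    have hb : ((lam p.1 - lam p.2) ^ 2 - 4 / 3) + ((lam q.1 - lam q.2) ^ 2 - 4 / 3)
        ≤ 1 / 3 := by
      rcases hdisj p hpF q hqF with hsh | hsh
      · have d2 : p.2 ≠ q.2 := fun hh => hpq (Prod.ext hsh hh)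
        have da2 : p.1 ≠ p.2 := hne12 p hpF
        have da3 : p.1 ≠ q.2 := fun hh => by rw [hh] at hsp; linarith [hsp.1, hsq'.2]
        have h3 := key3 p.1 p.2 q.2 da2 da3 d2
        rw [← hsh]
        rw [← hsh] at hq'
        nlinarith [sq_nonneg (lam p.1 + lam p.2 + lam q.2), sq_nonneg (lam p.2 - lam q.2)]
      · have d2 : p.1 ≠ q.1 := fun hh => hpq (Prod.ext hh hsh)
        have da2 : p.1 ≠ p.2 := hne12 p hpF
        have da3 : q.1 ≠ p.2 := fun hh => by rw [hh] at hsq'; linarith [hsq'.1, hsp.2]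
        have h3 := key3 p.1 q.1 p.2 d2 da2 da3
        rw [← hsh]
        rw [← hsh] at hq'
        nlinarith [sq_nonneg (lam p.1 + lam q.1 + lam p.2), sq_nonneg (lam p.1 - lam q.1)]
    refine ⟨by rw [hsumval]; linarith, ?_, ?_⟩
    · intro h
      rw [hsumval] at h
      exfalso; linarith
    · rintro ⟨hc1, -⟩
      omega
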